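/- arXiv:2605.25753 — 2 statements merged into one kernel-verified Lean document; each statement's English description precedes it below -/
import Mathlib

section
/- Let n ≥ 1 and let a, b be nonzero integers. If the trinomial F_{n,a,b}(x) = x^{2n} + a·x^n + b is irreducible over ℚ and its Galois group over ℚ (the Galois group of its splitting field over ℚ) is abelian, then n = 2^r·3^s for some nonnegative integers r and s. -/
open Polynomial

noncomputable def F (n : ℕ) (a b : ℤ) : Polynomial ℤ :=
  X ^ (2 * n) + C a * X ^ n + C b

noncomputable def Fq (n : ℕ) (a b : ℤ) : Polynomial ℚ :=
  (F n a b).map (Int.castRingHom ℚ)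

/-- `f` is monogenic: `f` is monic, irreducible over `ℚ`, and `ℤ[θ]` is the full ring of
integers (the integral closure of `ℤ`) of the field `K = ℚ(θ) = ℚ[x]/(f)`. -/
def IsMonogenic (f : Polynomial ℤ) : Prop :=
  f.Monic ∧ Irreducible (f.map (Int.castRingHom ℚ)) ∧
    Algebra.adjoin ℤ {AdjoinRoot.root (f.map (Int.castRingHom ℚ))} =
      integralClosure ℤ (AdjoinRoot (f.map (Int.castRingHom ℚ)))

/-- The Galois group (over `ℚ`) of the splitting field of `f` is abelian. -/
def GalAbelian (f : Polynomial ℤ) : Prop :=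
  ∀ σ τ : (f.map (Int.castRingHom ℚ)).Gal, σ * τ = τ * σ

/-- The index `[O_K : ℤ[θ]]` of `ℤ[θ]` in the ring of integers of `K = ℚ[x]/(f)`. -/
noncomputable def polyIndex (f : Polynomial ℤ) : ℕ :=
  AddSubgroup.relIndex
    ((Algebra.adjoin ℤ
        {AdjoinRoot.root (f.map (Int.castRingHom ℚ))}).toSubring.toAddSubgroup)
    ((integralClosure ℤ (AdjoinRoot (f.map (Int.castRingHom ℚ)))).toSubring.toAddSubgroup)

/-!
If the Galois group is abelian, every subfield of the splitting field is Galois over `ℚ`. For a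
prime `p ∣ n`, `F_{n,a,b}` is the expansion of `F_{p,a,b}` by `X ↦ X ^ (n / p)`, so `F_{p,a,b}` is
irreducible and `ℚ(α)` has degree `2p` for any of its roots `α`; being normal, `ℚ(α)` contains all
`2p` roots. Their `p`-th powers are roots of `X² + aX + b`, so two distinct roots `r, s` satisfy
`r ^ p = s ^ p`, and `r / s` is a primitive `p`-th root of unity in `ℚ(α)`. Hence `p - 1 ∣ 2p`,
which forces `p ≤ 3`.
-/

open IntermediateField

lemma exists_ne_pow_eq_pow_of_card_lt {K : Type*} [Field K] {p : ℕ} {a b : K} {S : Finset K}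
    (hS : ∀ x ∈ S, x ^ (2 * p) + a * x ^ p + b = 0) (hcard : 2 < S.card) :
    ∃ r ∈ S, ∃ s ∈ S, r ≠ s ∧ r ^ p = s ^ p := by
  classical
  set q : K[X] := X ^ 2 + C a * X + C b
  have hq : q.Monic := by simp only [q]; monicity!
  have hmaps : ∀ x ∈ S, x ^ p ∈ q.roots.toFinset := fun x hx => by
    rw [Multiset.mem_toFinset, mem_roots hq.ne_zero, IsRoot, ← hS x hx]
    simp only [q, eval_add, eval_mul, eval_pow, eval_X, eval_C, ← pow_mul, mul_comm p 2]
  have hlt : q.roots.toFinset.card < S.card := calc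
    q.roots.toFinset.card ≤ q.natDegree := (Multiset.toFinset_card_le _).trans (card_roots' q)
    _ ≤ 2 := by simp only [q]; compute_degree
    _ < S.card := hcard
  exact Finset.exists_ne_map_eq_of_card_lt_of_maps_to hlt hmaps

lemma isPrimitiveRoot_div_of_pow_eq_pow {K : Type*} [Field K] {p : ℕ} (hp : p.Prime) {r s : K}
    (hs : s ≠ 0) (hrs : r ≠ s) (h : r ^ p = s ^ p) : IsPrimitiveRoot (r / s) p := by
  classical
  refine isPrimitiveRoot_of_mem_nthRootsFinset hp ?_ (by rwa [Ne, div_eq_one_iff_eq hs])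
  rw [mem_nthRootsFinset hp.pos, div_pow, h, div_self (pow_ne_zero _ hs)]

lemma IsPrimitiveRoot.totient_dvd_finrank {K : Type*} [Field K] [Algebra ℚ K]
    [FiniteDimensional ℚ K] {ζ : K} {n : ℕ} (hζ : IsPrimitiveRoot ζ n) (hn : 0 < n) :
    n.totient ∣ Module.finrank ℚ K := by
  have hmin : cyclotomic n ℚ = minpoly ℚ ζ := by
    refine minpoly.eq_of_irreducible_of_monic (cyclotomic.irreducible_rat hn) ?_
      (cyclotomic.monic n ℚ)
    rw [aeval_def, eval₂_eq_eval_map, map_cyclotomic]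
    exact hζ.isRoot_cyclotomic hn
  simpa [← hmin, natDegree_cyclotomic] using minpoly.degree_dvd (IsIntegral.of_finite ℚ ζ)

lemma Nat.Prime.le_three_of_sub_one_dvd {p : ℕ} (hp : p.Prime) (h : p - 1 ∣ 2 * p) : p ≤ 3 := by
  have h2 : p - 1 ∣ 2 := by
    have := Nat.dvd_sub h (dvd_mul_left (p - 1) 2)
    rwa [show 2 * p - 2 * (p - 1) = 2 by have := hp.two_le; omega] at this
  have := Nat.le_of_dvd two_pos h2
  omega

lemma Nat.exists_eq_two_pow_mul_three_pow {n : ℕ} (hn : n ≠ 0)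
    (h : ∀ p, p.Prime → p ∣ n → p ≤ 3) : ∃ r s : ℕ, n = 2 ^ r * 3 ^ s := by
  refine ⟨n.factorization 2, n.factorization 3, ?_⟩
  have hsupp : n.factorization.support ⊆ {2, 3} := fun p hp => by
    rw [Nat.support_factorization] at hp
    have := h p (Nat.prime_of_mem_primeFactors hp) (Nat.dvd_of_mem_primeFactors hp)
    have := (Nat.prime_of_mem_primeFactors hp).two_le
    interval_cases p <;> simp
  conv_lhs => rw [← Nat.prod_factorization_pow_eq_self hn,
    Finsupp.prod_of_support_subset _ hsupp _ (fun _ _ => pow_zero _),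
    Finset.prod_pair (by norm_num)]

lemma isAbelianGalois_splittingField {K : Type*} [Field K] {f : K[X]} (hf : f.Separable)
    (h : ∀ σ τ : f.Gal, σ * τ = τ * σ) : IsAbelianGalois K f.SplittingField :=
  have := IsGalois.of_separable_splitting_field (E := f.SplittingField) hf
  { is_comm := ⟨h⟩ }

lemma exists_aeval_splittingField_eq_zero {K : Type*} [Field K] {f : K[X]} (hf : f.degree ≠ 0) :
    ∃ θ : f.SplittingField, aeval θ f = 0 := by
  obtain ⟨θ, hθ⟩ := (SplittingField.splits f).exists_eval_eq_zero (by rwa [degree_map])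
  exact ⟨θ, by rwa [aeval_def, eval₂_eq_eval_map]⟩

lemma Fq_eq (n : ℕ) (a b : ℤ) : Fq n a b = X ^ (2 * n) + C (a : ℚ) * X ^ n + C (b : ℚ) := by
  simp [Fq, F]

lemma natDegree_Fq {n : ℕ} (hn : n ≠ 0) (a b : ℤ) : (Fq n a b).natDegree = 2 * n := by
  rw [Fq_eq]
  compute_degree!
  all_goals omega

lemma monic_Fq {n : ℕ} (hn : n ≠ 0) (a b : ℤ) : (Fq n a b).Monic := by
  rw [Fq_eq]
  monicity!
  simp [hn, show ¬ 2 * n ≤ n by omega, show n ≤ 2 * n by omega]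

lemma aeval_Fq {A : Type*} [Ring A] [Algebra ℚ A] (n : ℕ) (a b : ℤ) (x : A) :
    aeval x (Fq n a b) = x ^ (2 * n) + a * x ^ n + b := by
  simp [Fq_eq]

lemma Fq_mul_eq_expand (d m : ℕ) (a b : ℤ) : Fq (d * m) a b = expand ℚ m (Fq d a b) := by
  simp [Fq_eq, ← pow_mul, mul_comm, mul_left_comm, mul_assoc]

lemma irreducible_Fq_of_dvd {n d : ℕ} (hn : n ≠ 0) {a b : ℤ} (hd : d ∣ n)
    (hirr : Irreducible (Fq n a b)) : Irreducible (Fq d a b) := by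
  obtain ⟨m, rfl⟩ := hd
  rw [Fq_mul_eq_expand] at hirr
  exact of_irreducible_expand (right_ne_zero_of_mul hn) hirr

lemma exists_isPrimitiveRoot_of_splits_Fq {K : Type*} [Field K] [Algebra ℚ K] {p : ℕ}
    (hp : p.Prime) {a b : ℤ} (hb : b ≠ 0) (hsep : (Fq p a b).Separable)
    (hsplit : ((Fq p a b).map (algebraMap ℚ K)).Splits) : ∃ ζ : K, IsPrimitiveRoot ζ p := by
  classical
  have := charZero_of_injective_algebraMap (algebraMap ℚ K).injective
  set S := ((Fq p a b).aroots K).toFinset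
  have hS : ∀ x ∈ S, x ^ (2 * p) + (a : K) * x ^ p + b = 0 := fun x hx => by
    rw [← aeval_Fq]
    exact (mem_aroots.mp (Multiset.mem_toFinset.mp hx)).2
  have hcard : S.card = 2 * p := by
    rw [← natDegree_Fq hp.ne_zero a b, ← card_rootSet_eq_natDegree hsep hsplit]
    simp [S, rootSet_def]
  obtain ⟨r, -, s, hs, hrs, hpow⟩ :=
    exists_ne_pow_eq_pow_of_card_lt hS (by have := hp.two_le; omega)
  have hs0 : s ≠ 0 := by
    rintro rfl
    exact hb (by simpa [hp.ne_zero] using hS 0 hs)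
  exact ⟨r / s, isPrimitiveRoot_div_of_pow_eq_pow hp hs0 hrs hpow⟩

lemma Nat.Prime.le_three_of_isAbelianGalois {L : Type*} [Field L] [Algebra ℚ L]
    [IsAbelianGalois ℚ L] {p : ℕ} (hp : p.Prime) {a b : ℤ} (hb : b ≠ 0)
    (hirr : Irreducible (Fq p a b)) {α : L} (hα : aeval α (Fq p a b) = 0) : p ≤ 3 := by
  have hmonic := monic_Fq hp.ne_zero a b
  have hmin : minpoly ℚ α = Fq p a b := (minpoly.eq_of_irreducible_of_monic hirr hα hmonic).symm
  have hint : IsIntegral ℚ α := ⟨_, hmonic, hα⟩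
  -- `ℚ⟮α⟯` is also a `ℚ`-algebra through `DivisionRing.toRatAlgebra`; pin down the structure
  -- that the `IntermediateField` API is stated for.
  let : Algebra ℚ ℚ⟮α⟯ := ℚ⟮α⟯.algebra'
  have := adjoin.finiteDimensional hint
  have hsplit : ((Fq p a b).map (algebraMap ℚ ℚ⟮α⟯)).Splits := by
    rw [← hmin, ← minpoly_gen]
    exact Normal.splits inferInstance _
  obtain ⟨ζ, hζ⟩ := exists_isPrimitiveRoot_of_splits_Fq hp hb hirr.separable hsplit
  apply hp.le_three_of_sub_one_dvd
  rw [← Nat.totient_prime hp, ← natDegree_Fq hp.ne_zero a b, ← hmin, ← adjoin.finrank hint]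
  exact hζ.totient_dvd_finrank hp.pos

theorem stmt0_general (n : ℕ) (hn : 1 ≤ n) (a b : ℤ) (hb : b ≠ 0)
    (hirr : Irreducible (Fq n a b)) (habel : GalAbelian (F n a b)) :
    ∃ r s : ℕ, n = 2 ^ r * 3 ^ s := by
  have hn0 : n ≠ 0 := by omega
  have : IsAbelianGalois ℚ (Fq n a b).SplittingField :=
    isAbelianGalois_splittingField hirr.separable habel
  obtain ⟨θ, hθ⟩ := exists_aeval_splittingField_eq_zero (degree_pos_of_irreducible hirr).ne'
  refine Nat.exists_eq_two_pow_mul_three_pow hn0 fun p hp hpn => ?_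
  obtain ⟨m, rfl⟩ := hpn
  refine hp.le_three_of_isAbelianGalois hb (irreducible_Fq_of_dvd hn0 (dvd_mul_right p m) hirr)
    (α := θ ^ m) ?_
  rwa [← expand_aeval, ← Fq_mul_eq_expand]

/-- If `F_{n,a,b}` is irreducible over `ℚ` with abelian Galois group,
then `n = 2^r * 3^s`. -/
theorem stmt0 (n : ℕ) (hn : 1 ≤ n) (a b : ℤ) (ha : a ≠ 0) (hb : b ≠ 0)
    (hirr : Irreducible (Fq n a b)) (habel : GalAbelian (F n a b)) :
    ∃ r s : ℕ, n = 2 ^ r * 3 ^ s :=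
  stmt0_general n hn a b hb hirr habel
end

section
/- Let n ≥ 1 and let a, b be nonzero integers. Suppose the trinomial F_{n,a,b}(x) = x^{2n} + a·x^n + b is irreducible over ℚ and its Galois group over ℚ is abelian. Then for every divisor d ≥ 1 of n, the trinomial F_{d,a,b}(x) = x^{2d} + a·x^d + b is irreducible over ℚ and its Galois group over ℚ is abelian. -/
open Polynomial

/-! Since `F_{dm} = F_d ∘ X^m`, both properties descend along composition with `X^m`: a
factorization of `F_d` composes to one of `F_{dm}` (composition with a nonconstant polynomial
does not create units), and every root of `F_d` is the `m`-th power of a root of `F_{dm}`, so the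
Galois group of `F_d` is a quotient of that of `F_{dm}`. -/

lemma Fq_mul_eq_comp (d m : ℕ) (a b : ℤ) : Fq (d * m) a b = (Fq d a b).comp (X ^ m) := by
  simp only [Fq, F, Polynomial.map_add, Polynomial.map_mul, Polynomial.map_pow, map_X, map_C,
    add_comp, mul_comp, pow_comp, X_comp, C_comp, ← pow_mul]
  ring_nf

section

variable {K : Type*} [Field K] {p q : K[X]}

theorem Polynomial.isLocalHom_compRingHom (hq : q.natDegree ≠ 0) :
    IsLocalHom (compRingHom q) where
  map_nonunit p hp := by
    have hp0 : p ≠ 0 := by rintro rfl; simp at hp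
    have hdeg : p.natDegree * q.natDegree = 0 := by
      rw [← natDegree_comp]; exact natDegree_eq_zero_of_isUnit hp
    rw [isUnit_iff_degree_eq_zero, degree_eq_natDegree hp0]
    simpa [hq] using hdeg

theorem Irreducible.of_comp (hq : q.natDegree ≠ 0) (h : Irreducible (p.comp q)) :
    Irreducible p :=
  have := isLocalHom_compRingHom hq
  Irreducible.of_map (f := compRingHom q) h

theorem Polynomial.Gal.mul_comm_of_comp (hq : q.natDegree ≠ 0)
    (h : ∀ σ τ : (p.comp q).Gal, σ * τ = τ * σ) (σ τ : p.Gal) : σ * τ = τ * σ := by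
  obtain ⟨σ, rfl⟩ := restrictComp_surjective p q hq σ
  obtain ⟨τ, rfl⟩ := restrictComp_surjective p q hq τ
  simp only [← map_mul, h σ τ]

end

theorem stmt1_general (n : ℕ) (hn : 1 ≤ n) (a b : ℤ)
    (hirr : Irreducible (Fq n a b)) (habel : GalAbelian (F n a b)) :
    ∀ d : ℕ, 1 ≤ d → d ∣ n → Irreducible (Fq d a b) ∧ GalAbelian (F d a b) := by
  rintro d - ⟨m, rfl⟩
  have hm : (X ^ m : ℚ[X]).natDegree ≠ 0 := by
    rw [natDegree_X_pow]; rintro rfl; simp at hn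
  rw [Fq_mul_eq_comp] at hirr
  rw [GalAbelian, ← Fq, Fq_mul_eq_comp] at habel
  exact ⟨hirr.of_comp hm, Gal.mul_comm_of_comp hm habel⟩

/-- If `F_{n,a,b}` is irreducible over `ℚ` with abelian Galois group, then for
every divisor `d ≥ 1` of `n`, `F_{d,a,b}` is irreducible over `ℚ` with abelian Galois group. -/
theorem stmt1 (n : ℕ) (hn : 1 ≤ n) (a b : ℤ) (ha : a ≠ 0) (hb : b ≠ 0)
    (hirr : Irreducible (Fq n a b)) (habel : GalAbelian (F n a b)) :
    ∀ d : ℕ, 1 ≤ d → d ∣ n → Irreducible (Fq d a b) ∧ GalAbelian (F d a b) :=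
  stmt1_general n hn a b hirr habel
end
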